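/- arXiv:2004.02269 — 4 statements merged into one kernel-verified Lean document; each statement's English description precedes it below -/
import Mathlib

section
/- Let k be a field and F : C → D a k-linear functor between small k-linear categories. For every object x of C there is an isomorphism of D-modules F^!(D C(x,-)) ≅ D D(F(x),-); that is, the functor y ↦ Hom_{Mod C}(Hom_D(F(-), y), D C(x,-)) is naturally isomorphic (in y) to the functor y ↦ Hom_k(D(F(x), y), k). -/
open CategoryTheory CategoryTheory.Limits Opposite

/-- The opposite of a `k`-linear category is `k`-linear. -/
noncomputable instance oppositeLinear (k : Type) [Field k] (C : Type) [SmallCategory C]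
    [Preadditive C] [Linear k C] : Linear k Cᵒᵖ where
  homModule X Y := Equiv.module k (opEquiv X Y)
  smul_comp _ _ _ _ _ _ := Quiver.Hom.unop_inj (Linear.comp_smul _ _ _ _ _ _)
  comp_smul _ _ _ _ _ _ := Quiver.Hom.unop_inj (Linear.smul_comp _ _ _ _ _ _)

variable (k : Type) [Field k]

/-- The `C`-module `D C(x,-) : y ↦ Hom_k(C(x,y), k)`. -/
noncomputable def DCoyo (C : Type) [SmallCategory C] [Preadditive C] [Linear k C] (x : C) :
    Cᵒᵖ ⥤ ModuleCat.{0} k where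
  obj y := ModuleCat.of k (Module.Dual k (x ⟶ y.unop))
  map {y y'} f := ModuleCat.ofHom <| LinearMap.dualMap (Linear.rightComp k x f.unop)
  map_id y := by
    refine ModuleCat.hom_ext <| LinearMap.ext fun (φ : Module.Dual k (x ⟶ y.unop)) => LinearMap.ext fun g => ?_
    show φ (g ≫ 𝟙 y.unop) = φ g
    rw [Category.comp_id]
  map_comp {y y' y''} f g := by
    refine ModuleCat.hom_ext <| LinearMap.ext fun (φ : Module.Dual k (x ⟶ y.unop)) => LinearMap.ext fun h => ?_
    show φ (h ≫ (g.unop ≫ f.unop)) = φ ((h ≫ g.unop) ≫ f.unop)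
    rw [Category.assoc]

variable {C D : Type} [SmallCategory C] [SmallCategory D]
  [Preadditive C] [Preadditive D] [Linear k C] [Linear k D]

/-- The functor `F^! : Mod C ⥤ Mod D`, given by
`F^!(M)(y) = Hom_{Mod C}(Hom_D(F(-), y), M)`. -/
noncomputable def Fshriek (F : C ⥤ D) :
    (Cᵒᵖ ⥤ ModuleCat.{0} k) ⥤ (Dᵒᵖ ⥤ ModuleCat.{0} k) :=
  linearYoneda k (Cᵒᵖ ⥤ ModuleCat.{0} k) ⋙
    (Functor.whiskeringLeft Dᵒᵖ (Cᵒᵖ ⥤ ModuleCat.{0} k)ᵒᵖ (ModuleCat.{0} k)).obj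
      (linearYoneda k D ⋙ (Functor.whiskeringLeft Cᵒᵖ Dᵒᵖ (ModuleCat.{0} k)).obj F.op).op

/-! A morphism `η : N ⟶ D C(x,-)` is determined by the linear form `n ↦ η n (𝟙 x)` on `N(x)`, since
naturality forces `η n h = η (N(h) n) (𝟙 x)`; this is the dual of the Yoneda lemma, and holds for every
linear `N`. Taking `N = D(F-, y)`, whose fibre at `x` is `D(F x, y)`, gives
`F^!(D C(x,-))(y) ≅ D D(F x, y)`, naturally in `y` because the bijection is natural in `N`. -/

section

variable {k}

instance Functor.op_linear (F : C ⥤ D) [F.Linear k] : F.op.Linear k where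
  map_smul f r := Quiver.Hom.unop_inj (F.map_smul r f.unop)

instance linearYoneda_obj_linear (y : D) : ((linearYoneda k D).obj y).Linear k where
  map_smul _ _ := ModuleCat.hom_ext <| LinearMap.ext fun _ => Linear.smul_comp _ _ _ _ _ _

namespace DCoyo

noncomputable def homEquiv (N : Cᵒᵖ ⥤ ModuleCat.{0} k) [N.Additive] [N.Linear k] (x : C) :
    (N ⟶ DCoyo k C x) ≃ₗ[k] Module.Dual k (N.obj (op x)) where
  toFun η := LinearMap.applyₗ (𝟙 x) ∘ₗ (η.app (op x)).hom
  map_add' _ _ := rfl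
  map_smul' _ _ := rfl
  invFun φ :=
    { app c := ModuleCat.ofHom <| LinearMap.mk₂ k (fun n (h : x ⟶ c.unop) => φ ((N.map h.op).hom n))
        (fun _ _ _ => by simp only [map_add])
        (fun _ _ _ => by simp only [map_smul])
        (fun n h h' => by simp only [op_add, N.map_add, ModuleCat.hom_add, LinearMap.add_apply, map_add])
        (fun a n h => by
          change φ ((N.map (a • h.op)).hom n) = _
          simp only [N.map_smul, ModuleCat.hom_smul, LinearMap.smul_apply, map_smul])
      naturality c c' f := ModuleCat.hom_ext <| LinearMap.ext fun n => LinearMap.ext fun h => by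
        change φ ((N.map h.op).hom ((N.map f).hom n)) = φ ((N.map (h ≫ f.unop).op).hom n)
        rw [op_comp, N.map_comp, ModuleCat.hom_comp, LinearMap.comp_apply, Quiver.Hom.op_unop] }
  left_inv η := NatTrans.ext <| funext fun c => ModuleCat.hom_ext <| LinearMap.ext fun n =>
    LinearMap.ext fun h => by
      change (show Module.Dual k (x ⟶ x) from (η.app (op x)).hom ((N.map h.op).hom n)) (𝟙 x) = _
      rw [← ModuleCat.comp_apply, η.naturality]
      exact congrArg (show Module.Dual k (x ⟶ c.unop) from (η.app c).hom n) (Category.id_comp h)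
  right_inv φ := LinearMap.ext fun n => by
    change φ ((N.map (𝟙 x).op).hom n) = φ n
    rw [op_id, N.map_id, ModuleCat.hom_id, LinearMap.id_apply]

end DCoyo

end

/-- For every `x : C` there is an isomorphism of `D`-modules
`F^!(D C(x,-)) ≅ D D(F(x),-)`. -/
theorem shriek_of_dual_coyoneda (F : C ⥤ D) [F.Additive] [F.Linear k] (x : C) :
    Nonempty ((Fshriek k F).obj (DCoyo k C x) ≅ DCoyo k D (F.obj x)) :=
  ⟨NatIso.ofComponents (fun y => (DCoyo.homEquiv (F.op ⋙ (linearYoneda k D).obj y.unop) x).toModuleIso)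
    fun _ => rfl⟩
end

section
/- Let (C_i, F_ij, θ_ijk) be a Cat-inverse system over a directed set I and let (C, Φ_i, Θ_ij) be its concrete inverse limit. Then (C, Φ_i, Θ_ij) is a source of the system, i.e. Θ_ij ∘ (F_ij Θ_jk) = Θ_ik ∘ (θ_ijk Φ_k) for all i < j < k, and it is the inverse limit: for every source (D, Ψ_i, Ξ_ij) with D a small category (i.e. functors Ψ_i : D → C_i and natural isomorphisms Ξ_ij : F_ij ∘ Ψ_j ⇒ Ψ_i satisfying Ξ_ij ∘ (F_ij Ξ_jk) = Ξ_ik ∘ (θ_ijk Ψ_k) for all i < j < k), there exists a unique functor G : D → C such that Φ_i ∘ G = Ψ_i for all i ∈ I and (Θ_ij)_{G(d)} = (Ξ_ij)_d for all i < j and every object d of D. -/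
open CategoryTheory CategoryTheory.Limits

/-- A `Cat`-inverse system over a directed set `ι`: small categories `C i`,
functors `F h : C j ⥤ C i` for `h : i < j`, and natural isomorphisms
`theta hij hjk : F hjk ⋙ F hij ≅ F (hij.trans hjk)` satisfying the cocycle condition. -/
structure CatInvSys (ι : Type) [Preorder ι] where
  C : ι → Type
  [cat : ∀ i, SmallCategory (C i)]
  F : ∀ {i j : ι}, i < j → (C j ⥤ C i)
  theta : ∀ {i j k : ι} (hij : i < j) (hjk : j < k), F hjk ⋙ F hij ≅ F (hij.trans hjk)
  theta_comp :
    ∀ {i j k l : ι} (hij : i < j) (hjk : j < k) (hkl : k < l) (x : C l),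
      (F hij).map ((theta hjk hkl).hom.app x) ≫ (theta hij (hjk.trans hkl)).hom.app x =
        (theta hij hjk).hom.app ((F hkl).obj x) ≫ (theta (hij.trans hjk) hkl).hom.app x

attribute [instance] CatInvSys.cat

variable {ι : Type} [Preorder ι]

/-- An object of the concrete inverse limit: a family of objects `pt i ∈ C i` together with
isomorphisms `f h : F h (pt j) ⟶ pt i` compatible with the natural isomorphisms `theta`. -/
structure LimObj (S : CatInvSys ι) where
  pt : ∀ i, S.C i
  f : ∀ {i j : ι} (h : i < j), (S.F h).obj (pt j) ⟶ pt i
  f_isIso : ∀ {i j : ι} (h : i < j), IsIso (f h)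
  compat : ∀ {i j k : ι} (hij : i < j) (hjk : j < k),
    (S.F hij).map (f hjk) ≫ f hij = (S.theta hij hjk).hom.app (pt k) ≫ f (hij.trans hjk)

/-- A morphism in the concrete inverse limit: a compatible family of morphisms. -/
structure LimHom {S : CatInvSys ι} (x y : LimObj S) where
  s : ∀ i, x.pt i ⟶ y.pt i
  nat : ∀ {i j : ι} (h : i < j), (S.F h).map (s j) ≫ y.f h = x.f h ≫ s i

theorem LimHom.ext' {S : CatInvSys ι} {x y : LimObj S} {φ ψ : LimHom x y}
    (h : ∀ i, φ.s i = ψ.s i) : φ = ψ := by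
  have hs : φ.s = ψ.s := funext h
  cases φ with
  | mk s nat =>
    cases ψ with
    | mk s' nat' =>
      dsimp at hs
      subst hs
      rfl

/-- The concrete inverse limit category. -/
instance limCategory (S : CatInvSys ι) : Category (LimObj S) where
  Hom := LimHom
  id x := ⟨fun _ => 𝟙 _, by intro i j h; simp⟩
  comp φ ψ := ⟨fun i => φ.s i ≫ ψ.s i, by
    intro i j h
    rw [Functor.map_comp, Category.assoc, ψ.nat h, ← Category.assoc, φ.nat h, Category.assoc]⟩
  id_comp φ := LimHom.ext' fun _ => Category.id_comp _
  comp_id φ := LimHom.ext' fun _ => Category.comp_id _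
  assoc φ ψ χ := LimHom.ext' fun _ => Category.assoc _ _ _

@[simp] theorem LimHom.comp_s {S : CatInvSys ι} {x y z : LimObj S} (φ : x ⟶ y) (ψ : y ⟶ z)
    (i : ι) : (LimHom.s (φ ≫ ψ) i) = LimHom.s φ i ≫ LimHom.s ψ i := rfl

@[simp] theorem LimHom.id_s {S : CatInvSys ι} (x : LimObj S) (i : ι) :
    LimHom.s (𝟙 x) i = 𝟙 (x.pt i) := rfl

/-- The projection functor `Φ i` from the concrete inverse limit to `C i`. -/
def Phi (S : CatInvSys ι) (i : ι) : LimObj S ⥤ S.C i where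
  obj x := x.pt i
  map φ := LimHom.s φ i
  map_id _ := rfl
  map_comp _ _ := rfl

/-- The natural isomorphism `Θ h : Φ j ⋙ F h ≅ Φ i`, whose component at an object is
the structure isomorphism of that object. -/
noncomputable def Theta (S : CatInvSys ι) {i j : ι} (h : i < j) : Phi S j ⋙ S.F h ≅ Phi S i :=
  NatIso.ofComponents (fun x => @asIso _ _ _ _ (x.f h) (x.f_isIso h))
    (fun {x y} φ => LimHom.nat φ h)

/-- `t` witnesses firmness of the object `x` of the concrete inverse limit. -/
def FirmWitness (S : CatInvSys ι) (x : LimObj S) (t : ι) : Prop :=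
  ∀ (u : ι) (htu : t < u) (a b : S.C u),
    Function.Bijective (fun φ : (Phi S u).obj x ⟶ b => (S.F htu).map φ) ∧
    Function.Bijective (fun φ : a ⟶ (Phi S u).obj x => (S.F htu).map φ)

/-- An object of the concrete inverse limit is firm if it admits a firmness witness. -/
def Firm (S : CatInvSys ι) (x : LimObj S) : Prop := ∃ t : ι, FirmWitness S x t

/-! The limit property is tautological for the concrete construction: the compatibility
condition on an object `(x_i, f_ij)` is the source condition evaluated at a single object, so a
source `(D, Ψ, Ξ)` yields `G d = (Ψ_i d, (Ξ_ij)_d)` and `G φ = (Ψ_i φ)`. Conversely an object of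
the limit is determined by its components and its structure isomorphisms, and a morphism by its
components, which forces uniqueness. -/

theorem LimObj.ext {S : CatInvSys ι} {x y : LimObj S} (hpt : x.pt = y.pt)
    (hf : ∀ {i j : ι} (h : i < j), HEq (x.f h) (y.f h)) : x = y := by
  obtain ⟨pt, f, _, _⟩ := x
  obtain ⟨pt', f', _, _⟩ := y
  cases hpt
  obtain rfl : @f = @f' := by
    funext i j h
    exact eq_of_heq (hf h)
  rfl

theorem LimHom.eqToHom_s {S : CatInvSys ι} {x y : LimObj S} (h : x = y) (i : ι) :
    LimHom.s (eqToHom h) i = eqToHom (congrArg (fun z => z.pt i) h) := by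
  subst h
  rfl

theorem LimObj.functor_ext {S : CatInvSys ι} {D : Type*} [Category D]
    {G G' : D ⥤ LimObj S} (hPhi : ∀ i, G ⋙ Phi S i = G' ⋙ Phi S i)
    (hTheta : ∀ {i j : ι} (h : i < j) (d : D),
      HEq ((Theta S h).hom.app (G.obj d)) ((Theta S h).hom.app (G'.obj d))) :
    G = G' := by
  have hobj : ∀ d, G.obj d = G'.obj d := fun d =>
    LimObj.ext (funext fun i => Functor.congr_obj (hPhi i) d) (hTheta · d)
  refine CategoryTheory.Functor.ext hobj fun d d' φ => LimHom.ext' fun i => ?_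
  have hmap := Functor.congr_hom (hPhi i) φ
  simp only [Functor.comp_map, Phi] at hmap
  rw [hmap, LimHom.comp_s, LimHom.comp_s, LimHom.eqToHom_s, LimHom.eqToHom_s]

namespace CatInvSys

variable (S : CatInvSys ι)

def IsSource {D : Type*} [Category D] (Ψ : ∀ i, D ⥤ S.C i)
    (Ξ : ∀ {i j : ι} (h : i < j), Ψ j ⋙ S.F h ≅ Ψ i) : Prop :=
  ∀ {i j k : ι} (hij : i < j) (hjk : j < k) (d : D),
    (S.F hij).map ((Ξ hjk).hom.app d) ≫ (Ξ hij).hom.app d =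
      (S.theta hij hjk).hom.app ((Ψ k).obj d) ≫ (Ξ (hij.trans hjk)).hom.app d

theorem isSource_Theta : S.IsSource (Phi S) (fun h => Theta S h) :=
  fun hij hjk x => x.compat hij hjk

variable {S} {D : Type*} [Category D] {Ψ : ∀ i, D ⥤ S.C i}
  {Ξ : ∀ {i j : ι} (h : i < j), Ψ j ⋙ S.F h ≅ Ψ i}

noncomputable def lift (hΞ : S.IsSource Ψ Ξ) : D ⥤ LimObj S where
  obj d :=
    { pt := fun i => (Ψ i).obj d
      f := fun h => (Ξ h).hom.app d
      f_isIso := fun _ => inferInstance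
      compat := fun hij hjk => hΞ hij hjk d }
  map φ :=
    { s := fun i => (Ψ i).map φ
      nat := fun h => (Ξ h).hom.naturality φ }
  map_id d := LimHom.ext' fun i => (Ψ i).map_id d
  map_comp φ ψ := LimHom.ext' fun i => (Ψ i).map_comp φ ψ

theorem lift_comp_Phi (hΞ : S.IsSource Ψ Ξ) (i : ι) : lift hΞ ⋙ Phi S i = Ψ i :=
  rfl

theorem Theta_app_lift (hΞ : S.IsSource Ψ Ξ) {i j : ι} (h : i < j) (d : D) :
    (Theta S h).hom.app ((lift hΞ).obj d) = (Ξ h).hom.app d :=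
  rfl

theorem eq_lift (hΞ : S.IsSource Ψ Ξ) {G : D ⥤ LimObj S} (hPhi : ∀ i, G ⋙ Phi S i = Ψ i)
    (hTheta : ∀ {i j : ι} (h : i < j) (d : D),
      HEq ((Theta S h).hom.app (G.obj d)) ((Ξ h).hom.app d)) :
    G = lift hΞ :=
  LimObj.functor_ext (fun i => (hPhi i).trans (lift_comp_Phi hΞ i).symm)
    fun h d => (hTheta h d).trans (heq_of_eq (Theta_app_lift hΞ h d).symm)

end CatInvSys

theorem concrete_inverse_limit_is_limit_general {ι : Type} [Preorder ι]
    (S : CatInvSys ι) :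
    (∀ {i j k : ι} (hij : i < j) (hjk : j < k) (x : LimObj S),
      (S.F hij).map ((Theta S hjk).hom.app x) ≫ (Theta S hij).hom.app x =
        (S.theta hij hjk).hom.app ((Phi S k).obj x) ≫ (Theta S (hij.trans hjk)).hom.app x) ∧
    (∀ (D : Type) [SmallCategory D] (Ψ : ∀ i : ι, D ⥤ S.C i)
      (Ξ : ∀ {i j : ι} (h : i < j), Ψ j ⋙ S.F h ≅ Ψ i),
      (∀ {i j k : ι} (hij : i < j) (hjk : j < k) (d : D),
        (S.F hij).map ((Ξ hjk).hom.app d) ≫ (Ξ hij).hom.app d =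
          (S.theta hij hjk).hom.app ((Ψ k).obj d) ≫ (Ξ (hij.trans hjk)).hom.app d) →
      ∃! G : D ⥤ LimObj S,
        (∀ i : ι, G ⋙ Phi S i = Ψ i) ∧
        (∀ {i j : ι} (h : i < j) (d : D),
          HEq ((Theta S h).hom.app (G.obj d)) ((Ξ h).hom.app d))) :=
  ⟨S.isSource_Theta, fun _ _ _ _ hΞ =>
    ⟨CatInvSys.lift hΞ,
      ⟨CatInvSys.lift_comp_Phi hΞ, fun h d => heq_of_eq (CatInvSys.Theta_app_lift hΞ h d)⟩,
      fun _ ⟨hPhi, hTheta⟩ => CatInvSys.eq_lift hΞ hPhi hTheta⟩⟩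

/-- The concrete inverse limit of a `Cat`-inverse system is a source of the system and is
its inverse limit: it satisfies the source compatibility condition, and for every small
source `(D, Ψ, Ξ)` there is a unique functor `G : D ⥤ C` with `G ⋙ Φ i = Ψ i` for all `i`
and `(Θ h) (G d) = (Ξ h) d` for all `h : i < j` and objects `d` of `D`. -/
theorem concrete_inverse_limit_is_limit {ι : Type} [Preorder ι] [IsDirected ι (· ≤ ·)]
    (S : CatInvSys ι) :
    (∀ {i j k : ι} (hij : i < j) (hjk : j < k) (x : LimObj S),
      (S.F hij).map ((Theta S hjk).hom.app x) ≫ (Theta S hij).hom.app x =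
        (S.theta hij hjk).hom.app ((Phi S k).obj x) ≫ (Theta S (hij.trans hjk)).hom.app x) ∧
    (∀ (D : Type) [SmallCategory D] (Ψ : ∀ i : ι, D ⥤ S.C i)
      (Ξ : ∀ {i j : ι} (h : i < j), Ψ j ⋙ S.F h ≅ Ψ i),
      (∀ {i j k : ι} (hij : i < j) (hjk : j < k) (d : D),
        (S.F hij).map ((Ξ hjk).hom.app d) ≫ (Ξ hij).hom.app d =
          (S.theta hij hjk).hom.app ((Ψ k).obj d) ≫ (Ξ (hij.trans hjk)).hom.app d) →
      ∃! G : D ⥤ LimObj S,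
        (∀ i : ι, G ⋙ Phi S i = Ψ i) ∧
        (∀ {i j : ι} (h : i < j) (d : D),
          HEq ((Theta S h).hom.app (G.obj d)) ((Ξ h).hom.app d))) :=
  concrete_inverse_limit_is_limit_general S
end

section
/- Let (C_i, F_ij, θ_ijk) be a Cat-inverse system over a directed set I such that every C_i has split idempotents. Then the concrete inverse limit C has split idempotents: for every idempotent e = (e_i) : x → x in C there exist an object y of C and morphisms s : x → y and r : y → x with r ∘ s = e and s ∘ r = id_y. -/
open CategoryTheory CategoryTheory.Limits

variable {ι : Type} [Preorder ι]

/-- If every category in a `Cat`-inverse system has split idempotents, then the concrete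
inverse limit has split idempotents: every idempotent `e : x ⟶ x` factors as `e = s ≫ r`
with `r ≫ s = 𝟙`. -/
theorem limit_has_split_idempotents {ι : Type} [Preorder ι] [IsDirected ι (· ≤ ·)]
    (S : CatInvSys ι) (hsplit : ∀ i, IsIdempotentComplete (S.C i)) :
    ∀ (x : LimObj S) (e : x ⟶ x), e ≫ e = e →
      ∃ (y : LimObj S) (s : x ⟶ y) (r : y ⟶ x), s ≫ r = e ∧ r ≫ s = 𝟙 y := by
  intro x e he
  choose Y inc proj hsec hsplit' using fun i =>
    (hsplit i).idempotents_split (x.pt i) (e.s i) (by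
      have := congrArg (fun φ => LimHom.s φ i) he
      simpa using this)
  have enat : ∀ {i j : ι} (h : i < j),
      (S.F h).map (e.s j) ≫ x.f h = x.f h ≫ e.s i := fun h => e.nat h
  have hincE : ∀ i, inc i ≫ e.s i = inc i := by
    intro i; rw [← hsplit' i, ← Category.assoc, hsec i, Category.id_comp]
  have hEproj : ∀ i, e.s i ≫ proj i = proj i := by
    intro i; rw [← hsplit' i, Category.assoc, hsec i, Category.comp_id]
  refine ⟨{ pt := Y
            f := fun {i j} h => (S.F h).map (inc j) ≫ x.f h ≫ proj i
            f_isIso := ?_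
            compat := ?_ }, ⟨proj, ?_⟩, ⟨inc, ?_⟩, ?_, ?_⟩
  · intro i j h
    have : IsIso (x.f h) := x.f_isIso h
    refine ⟨inc i ≫ inv (x.f h) ≫ (S.F h).map (proj j), ?_, ?_⟩
    · simp only [Category.assoc]
      slice_lhs 3 4 => rw [hsplit' i]
      slice_lhs 2 3 => rw [← enat h]
      slice_lhs 3 4 => rw [IsIso.hom_inv_id]
      simp only [Category.id_comp, Category.comp_id]
      rw [← Functor.map_comp, ← Functor.map_comp, hEproj j, hsec j, CategoryTheory.Functor.map_id]
    · simp only [Category.assoc]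
      slice_lhs 3 4 => rw [← Functor.map_comp, hsplit' j]
      slice_lhs 3 4 => rw [enat h]
      slice_lhs 2 3 => rw [IsIso.inv_hom_id]
      simp only [Category.id_comp, Category.comp_id]
      rw [hEproj i, hsec i]
  · intro i j k hij hjk
    simp only [Functor.map_comp, Category.assoc]
    slice_lhs 3 4 => rw [← Functor.map_comp, hsplit' j]
    slice_lhs 3 4 => rw [enat hij]
    slice_lhs 4 5 => rw [hEproj i]
    slice_lhs 2 3 => rw [x.compat hij hjk]
    slice_lhs 1 2 => rw [← Functor.comp_map, (S.theta hij hjk).hom.naturality (inc k)]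
    simp only [Category.assoc]
  · intro i j h
    show (S.F h).map (proj j) ≫ (S.F h).map (inc j) ≫ x.f h ≫ proj i = x.f h ≫ proj i
    rw [← Category.assoc, ← Functor.map_comp, hsplit' j, ← Category.assoc, enat h,
      Category.assoc, hEproj i]
  · intro i j h
    show (S.F h).map (inc j) ≫ x.f h = ((S.F h).map (inc j) ≫ x.f h ≫ proj i) ≫ inc i
    rw [Category.assoc, Category.assoc, hsplit' i, ← enat h, ← Category.assoc,
      ← Functor.map_comp, hincE j]
  · exact LimHom.ext' fun i => hsplit' i
  · exact LimHom.ext' fun i => hsec i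
end

section
/- Let (C_i, F_ij, θ_ijk) be a Cat-inverse system over a directed set I with concrete inverse limit (C, Φ_i, Θ_ij). Let e : x → x be an idempotent in C and let s : x → y and r : y → x be morphisms in C with r ∘ s = e and s ∘ r = id_y. If x is a firm object, then y is a firm object. -/
open CategoryTheory CategoryTheory.Limits

variable {ι : Type} [Preorder ι]

namespace CategoryTheory.Functor

variable {C D : Type*} [Category C] [Category D] (F : C ⥤ D) {X Y : C}

theorem map_bijective_source_of_retract (h : Retract Y X) {B : C}
    (hX : Function.Bijective (F.map : (X ⟶ B) → (F.obj X ⟶ F.obj B))) :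
    Function.Bijective (F.map : (Y ⟶ B) → (F.obj Y ⟶ F.obj B)) := by
  constructor
  · intro φ ψ hφψ
    have : h.r ≫ φ = h.r ≫ ψ := hX.1 (by simp only [map_comp, hφψ])
    simpa using h.i ≫= this
  · intro g
    obtain ⟨φ, hφ⟩ := hX.2 (F.map h.r ≫ g)
    exact ⟨h.i ≫ φ, by rw [map_comp, hφ, ← Category.assoc, ← map_comp, h.retract, map_id,
      Category.id_comp]⟩

theorem map_bijective_target_of_retract (h : Retract Y X) {A : C}
    (hX : Function.Bijective (F.map : (A ⟶ X) → (F.obj A ⟶ F.obj X))) :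
    Function.Bijective (F.map : (A ⟶ Y) → (F.obj A ⟶ F.obj Y)) := by
  constructor
  · intro φ ψ hφψ
    have : φ ≫ h.i = ψ ≫ h.i := hX.1 (by simp only [map_comp, hφψ])
    simpa using this =≫ h.r
  · intro g
    obtain ⟨φ, hφ⟩ := hX.2 (g ≫ F.map h.i)
    exact ⟨φ ≫ h.r, by rw [map_comp, hφ, Category.assoc, ← map_comp, h.retract, map_id,
      Category.comp_id]⟩

end CategoryTheory.Functor

theorem FirmWitness.of_retract {S : CatInvSys ι} {x y : LimObj S} {t : ι}
    (h : Retract y x) (hx : FirmWitness S x t) : FirmWitness S y t := fun u htu a b =>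
  ⟨(S.F htu).map_bijective_source_of_retract (h.map (Phi S u)) (hx u htu a b).1,
    (S.F htu).map_bijective_target_of_retract (h.map (Phi S u)) (hx u htu a b).2⟩

theorem firm_of_retract {ι : Type} [Preorder ι] (S : CatInvSys ι)
    {x y : LimObj S}
    (s : x ⟶ y) (r : y ⟶ x) (_ : r ≫ s = 𝟙 y) :
    Firm S x → Firm S y := by
  rintro ⟨t, ht⟩
  exact ⟨t, ht.of_retract ⟨r, s, ‹_›⟩⟩
end
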